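/- Let n ≥ 1, 1 ≤ m ≤ n, M_1, …, M_m positive integers, μ = (M_1+…+M_m)^{M_1+…+M_m}/(M_1^{M_1}⋯M_m^{M_m}), α ∈ ℝ, and β(α) = α − n + (m+1)/2. There exist constants c, C > 0 (depending only on n, m, M, α) such that: for every holomorphic f on B_n of the diagonal form f(z) = Σ_{l=0}^∞ a_l·(z_1^{M_1}⋯z_m^{M_m})^l, one has c·Σ_{l=0}^∞ (l+1)^{β(α)}·μ^{−l}·|a_l|² ≤ ‖f‖²_α ≤ C·Σ_{l=0}^∞ (l+1)^{β(α)}·μ^{−l}·|a_l|² (as inequalities in [0,∞]). Equivalently, ‖f‖_α is comparable to the d_{β(α)}-norm of the one-variable function f̃(w) = Σ_l μ^{−l/4} a_l w^l determined by f(z) = f̃(μ^{1/4} z_1^{M_1}⋯z_m^{M_m}). -/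

import Mathlib

open MeasureTheory
open scoped ENNReal Classical

noncomputable section

/-- The ambient space `ℂⁿ` with the Euclidean norm; the unit ball `𝔹ₙ` is
`Metric.ball (0 : En n) 1` and the unit sphere `𝕊ₙ` is `Metric.sphere (0 : En n) 1`. -/
abbrev En (n : ℕ) := EuclideanSpace ℂ (Fin n)

/-- Lebesgue measure on `ℂⁿ`, transported along the definitional equality
`EuclideanSpace ℂ (Fin n) = (Fin n → ℂ)`. -/
noncomputable instance (n : ℕ) : MeasureSpace (En n) where
  toMeasurableSpace := MeasurableSpace.comap (WithLp.ofLp (p := 2)) inferInstance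
  volume := @Measure.map (Fin n → ℂ) (En n) inferInstance
    (MeasurableSpace.comap (WithLp.ofLp (p := 2)) inferInstance) (WithLp.toLp 2) volume

/-- `|k| = k₁ + … + kₙ` for a multi-index `k`. -/
def mOrd {n : ℕ} (k : Fin n → ℕ) : ℕ := ∑ i, k i

/-- `k! = k₁! ⋯ kₙ!` for a multi-index `k`. -/
def mFact {n : ℕ} (k : Fin n → ℕ) : ℕ := ∏ i, (k i).factorial

/-- `z^k = z₁^{k₁} ⋯ zₙ^{kₙ}` for a multi-index `k`. -/
def mPow {n : ℕ} (z : En n) (k : Fin n → ℕ) : ℂ := ∏ i, z i ^ k i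

/-- The weight `(n+|k|)^α · (n-1)!·k! / (n-1+|k|)!` appearing in the Dirichlet-type norm. -/
def dWeight (n : ℕ) (α : ℝ) (k : Fin n → ℕ) : ℝ :=
  ((n : ℝ) + mOrd k) ^ α * (((n - 1).factorial * mFact k : ℕ) : ℝ) /
    (((n - 1 + mOrd k).factorial : ℕ) : ℝ)

/-- The squared Dirichlet-type norm `‖·‖²_α` of a family of Taylor coefficients,
valued in `[0,∞]`. -/
def Dnorm2 (n : ℕ) (α : ℝ) (a : (Fin n → ℕ) → ℂ) : ℝ≥0∞ :=
  ∑' k : Fin n → ℕ, ENNReal.ofReal (dWeight n α k * ‖a k‖ ^ 2)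

/-- `a` is the family of power-series (Taylor) coefficients of `f` on the unit ball:
`f z = Σ_k a_k z^k` for every `z` in the ball. -/
def HasCoeffs (n : ℕ) (f : En n → ℂ) (a : (Fin n → ℕ) → ℂ) : Prop :=
  ∀ z ∈ Metric.ball (0 : En n) 1, HasSum (fun k => a k * mPow z k) (f z)

/-- The squared Dirichlet-type norm `‖f‖²_α` of a function, computed through its
power-series coefficients (which are unique when they exist). -/
def DnormF2 (n : ℕ) (α : ℝ) (f : En n → ℂ) : ℝ≥0∞ :=
  sInf {x | ∃ a, HasCoeffs n f a ∧ x = Dnorm2 n α a}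

/-- Membership in the Dirichlet-type space `D_α(𝔹ₙ)`. -/
def MemD (n : ℕ) (α : ℝ) (f : En n → ℂ) : Prop :=
  DifferentiableOn ℂ f (Metric.ball 0 1) ∧ ∃ a, HasCoeffs n f a ∧ Dnorm2 n α a < ⊤

/-- `f` is a cyclic vector of `D_α(𝔹ₙ)`: for every `ε > 0` there is a polynomial `q`
with `‖q·f - 1‖²_α < ε`. -/
def CyclicD (n : ℕ) (α : ℝ) (f : En n → ℂ) : Prop :=
  ∀ ε : ℝ, 0 < ε → ∃ q : MvPolynomial (Fin n) ℂ,
    DnormF2 n α (fun z => MvPolynomial.eval (fun i => z i) q * f z - 1) < ENNReal.ofReal ε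

/-- `μ = (M₁+…+M_m)^{M₁+…+M_m}/(M₁^{M₁}⋯M_m^{M_m})`. -/
def muVal (m : ℕ) (M : Fin m → ℕ) : ℝ :=
  (((∑ i, M i) ^ (∑ i, M i) : ℕ) : ℝ) / ∏ i, ((M i : ℝ) ^ M i)

/-- The diagonal multi-index `(M₁l, …, M_ml, 0, …, 0) ∈ ℕⁿ`. -/
def diagIdx {n m : ℕ} (hmn : m ≤ n) (M : Fin m → ℕ) (l : ℕ) : Fin n → ℕ :=
  fun i => if h : (i : ℕ) < m then M ⟨(i : ℕ), h⟩ * l else 0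

/-! On the diagonal multi-index `k = (M₁l, …, M_ml, 0, …, 0)`, with `S = M₁ + … + M_m`, the
weight of `‖·‖²_α` is `(n + Sl)^α (n-1)! ∏ (M_i l)! / (n - 1 + Sl)!`. By Stirling's formula the
multinomial ratio `∏ (M_i l)! / (Sl)!` is of exact order `l^{(m-1)/2} μ^{-l}`, and
`(n - 1 + Sl)! / (Sl)!` is a falling factorial of order `l^{n-1}`, so the weight is
`Θ((l+1)^{β(α)} μ^{-l})`. Both sides being positive for every `l`, the asymptotic comparison is a
uniform two-sided bound, which is then summed against `|a_l|²`. -/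

open Asymptotics Filter Finset Real
open scoped Nat Topology

lemma exists_pos_bounds_of_isTheta {u v : ℕ → ℝ} (hu : ∀ l, 0 < u l) (hv : ∀ l, 0 < v l)
    (h : u =Θ[atTop] v) : ∃ c C : ℝ, 0 < c ∧ 0 < C ∧ ∀ l, c * v l ≤ u l ∧ u l ≤ C * v l := by
  obtain ⟨C, hC, huv⟩ := bound_of_isBigO_nat_atTop h.isBigO
  obtain ⟨D, hD, hvu⟩ := bound_of_isBigO_nat_atTop h.isBigO_symm
  refine ⟨D⁻¹, C, inv_pos.2 hD, hC, fun l => ⟨?_, ?_⟩⟩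
  · have := hvu (hu l).ne'
    rw [norm_of_nonneg (hu l).le, norm_of_nonneg (hv l).le] at this
    rwa [inv_mul_le_iff₀ hD]
  · simpa only [norm_of_nonneg (hu l).le, norm_of_nonneg (hv l).le] using huv (hv l).ne'

lemma isTheta_const_add_mul_natCast (a : ℝ) {b : ℝ} (hb : b ≠ 0) :
    (fun l : ℕ => a + b * l) =Θ[atTop] fun l => (l : ℝ) := by
  refine (isTheta_of_div_tendsto_nhds_ne_zero (c := b) ?_ hb).symm
  have hlim : Tendsto (fun l : ℕ => a / l + b) atTop (𝓝 b) := by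
    simpa using (tendsto_const_div_atTop_nhds_zero_nat a).add_const b
  refine hlim.congr' ?_
  filter_upwards [eventually_ne_atTop 0] with l hl
  field_simp

lemma factorial_isTheta_sqrt_mul_pow :
    (fun k : ℕ => (k ! : ℝ)) =Θ[atTop] fun k => √k * (k / exp 1) ^ k := by
  refine Stirling.factorial_isEquivalent_stirling.isTheta.trans ?_
  have hsplit : (fun k : ℕ => √(2 * k * π) * (k / exp 1) ^ k) =
      fun k : ℕ => √(2 * π) * (√k * (k / exp 1) ^ k) := by
    ext k
    rw [show 2 * (k : ℝ) * π = 2 * π * k by ring, sqrt_mul (by positivity)]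
    ring
  rw [hsplit]
  exact isTheta_rfl.const_mul_left (by positivity)

lemma muVal_pos (m : ℕ) (M : Fin m → ℕ) : 0 < muVal m M :=
  div_pos (mod_cast Nat.pow_self_pos) (prod_pos fun _ _ => mod_cast Nat.pow_self_pos)

lemma muVal_rpow_neg_natCast (m : ℕ) (M : Fin m → ℕ) (l : ℕ) :
    muVal m M ^ (-(l : ℝ)) =
      (∏ i, (M i : ℝ) ^ (M i * l)) / ((∑ i, M i : ℕ) : ℝ) ^ ((∑ i, M i) * l) := by
  rw [rpow_neg (muVal_pos m M).le, rpow_natCast, muVal, div_pow, inv_div, Nat.cast_pow, ← pow_mul,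
    ← Finset.prod_pow]
  simp_rw [← pow_mul]

lemma prod_stirling_div_stirling {m : ℕ} (M : Fin m → ℕ) (hS : 0 < ∑ i, M i) {l : ℕ}
    (hl : l ≠ 0) :
    (∏ i, (√(M i * l : ℕ) * ((M i * l : ℕ) / exp 1) ^ (M i * l))) /
        (√((∑ i, M i) * l : ℕ) * (((∑ i, M i) * l : ℕ) / exp 1) ^ ((∑ i, M i) * l)) =
      (∏ i, √(M i : ℝ)) / √((∑ i, M i : ℕ) : ℝ) *
        ((l : ℝ) ^ (((m : ℝ) - 1) / 2) * muVal m M ^ (-(l : ℝ))) := by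
  set S := ∑ i, M i with hS_def
  have hx : (0 : ℝ) < l := by positivity
  have hsplit : ∀ p : ℕ, √(p * l : ℕ) * ((p * l : ℕ) / exp 1) ^ (p * l) =
      √(p : ℝ) * √(l : ℝ) * ((p : ℝ) ^ (p * l) * ((l : ℝ) / exp 1) ^ (p * l)) := by
    intro p
    rw [Nat.cast_mul, sqrt_mul (Nat.cast_nonneg _), mul_div_assoc, mul_pow]
  have hnum : ∏ i, (√(M i * l : ℕ) * ((M i * l : ℕ) / exp 1) ^ (M i * l)) =
      (∏ i, √(M i : ℝ)) * √(l : ℝ) ^ m * (∏ i, (M i : ℝ) ^ (M i * l)) *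
        ((l : ℝ) / exp 1) ^ (S * l) := by
    simp_rw [hsplit, Finset.prod_mul_distrib, Finset.prod_const, Finset.card_univ,
      Fintype.card_fin, Finset.prod_pow_eq_pow_sum, ← Finset.sum_mul]
    ring
  have hpow : (l : ℝ) ^ (((m : ℝ) - 1) / 2) = √(l : ℝ) ^ m / √(l : ℝ) := by
    rw [sqrt_eq_rpow, ← rpow_natCast, ← rpow_mul hx.le, ← rpow_sub hx]
    ring_nf
  rw [hnum, hsplit, muVal_rpow_neg_natCast, hpow, ← hS_def]
  have : 0 < (S : ℝ) := by exact_mod_cast hS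
  field_simp

lemma isTheta_multinomial {m : ℕ} (M : Fin m → ℕ) (hM : ∀ i, 0 < M i) (hS : 0 < ∑ i, M i) :
    (fun l : ℕ => (∏ i, ((M i * l)! : ℝ)) / ((∑ i, M i) * l)!) =Θ[atTop]
      fun l : ℕ => (l : ℝ) ^ (((m : ℝ) - 1) / 2) * muVal m M ^ (-(l : ℝ)) := by
  have hst {k : ℕ → ℕ} (hk : Tendsto k atTop atTop) :=
    And.intro (factorial_isTheta_sqrt_mul_pow.1.comp_tendsto hk)
      (factorial_isTheta_sqrt_mul_pow.2.comp_tendsto hk)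
  have hnum := IsTheta.finsetProd (s := univ) fun i _ => hst (tendsto_id.const_mul_atTop' (hM i))
  have hden := hst (tendsto_id.const_mul_atTop' hS)
  have hK : (∏ i, √(M i : ℝ)) / √((∑ i, M i : ℕ) : ℝ) ≠ 0 :=
    div_ne_zero (prod_ne_zero_iff.2 fun i _ => (sqrt_pos.2 (mod_cast hM i)).ne')
      (sqrt_pos.2 (mod_cast hS)).ne'
  refine (isTheta_const_mul_right hK).1 ((hnum.div hden).trans_eventuallyEq ?_)
  filter_upwards [eventually_ne_atTop 0] with l hl
  exact prod_stirling_div_stirling M hS hl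

lemma dWeight_pos {n : ℕ} (hn : 0 < n) (α : ℝ) (k : Fin n → ℕ) : 0 < dWeight n α k := by
  have hbase : (0 : ℝ) < n + mOrd k := by positivity
  have hfact : 0 < mFact k := Finset.prod_pos fun i _ => Nat.factorial_pos _
  exact div_pos (mul_pos (rpow_pos_of_pos hbase α)
    (Nat.cast_pos.2 (Nat.mul_pos (Nat.factorial_pos _) hfact))) (Nat.cast_pos.2 (Nat.factorial_pos _))

section diagIdx

variable {n m : ℕ} (hmn : m ≤ n) (M : Fin m → ℕ)

lemma diagIdx_castLE (l : ℕ) (i : Fin m) : diagIdx hmn M l (Fin.castLE hmn i) = M i * l := by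
  simp [diagIdx]

lemma diagIdx_of_notMem_range {l : ℕ} {j : Fin n} (hj : j ∉ Set.range (Fin.castLE hmn)) :
    diagIdx hmn M l j = 0 :=
  dif_neg fun h => hj ⟨⟨j, h⟩, rfl⟩

lemma mOrd_diagIdx (l : ℕ) : mOrd (diagIdx hmn M l) = (∑ i, M i) * l := by
  rw [Finset.sum_mul, mOrd]
  exact (Fintype.sum_of_injective _ (Fin.castLE_injective hmn) _ _
    (fun j hj => diagIdx_of_notMem_range hmn M hj) fun i => (diagIdx_castLE hmn M l i).symm).symm

lemma mFact_diagIdx (l : ℕ) : mFact (diagIdx hmn M l) = ∏ i, (M i * l)! := by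
  rw [mFact]
  refine (Fintype.prod_of_injective _ (Fin.castLE_injective hmn) _ _
    (fun j hj => ?_) fun i => by rw [diagIdx_castLE]).symm
  rw [diagIdx_of_notMem_range hmn M hj, Nat.factorial_zero]

lemma diagIdx_injective (hm : 0 < m) (hM : ∀ i, 0 < M i) : Function.Injective (diagIdx hmn M) :=
  fun l₁ l₂ h => by
    have := congrFun h (Fin.castLE hmn ⟨0, hm⟩)
    rwa [diagIdx_castLE, diagIdx_castLE, Nat.mul_left_cancel_iff (hM _)] at this

lemma dWeight_diagIdx (α : ℝ) (l : ℕ) :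
    dWeight n α (diagIdx hmn M l) =
      (n - 1)! * (((n : ℝ) + ((∑ i, M i) * l : ℕ)) ^ α *
        ((∏ i, ((M i * l)! : ℝ)) / ((∑ i, M i) * l)!) /
        ((n - 1 + (∑ i, M i) * l).descFactorial (n - 1))) := by
  have hfact := Nat.factorial_mul_descFactorial (Nat.le_add_right (n - 1) ((∑ i, M i) * l))
  rw [Nat.add_sub_cancel_left] at hfact
  rw [dWeight, mOrd_diagIdx, mFact_diagIdx, ← hfact]
  have : (((∑ i, M i) * l)! : ℝ) ≠ 0 := by positivity
  have : ((n - 1 + (∑ i, M i) * l).descFactorial (n - 1) : ℝ) ≠ 0 := by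
    exact_mod_cast (Nat.descFactorial_pos.2 (Nat.le_add_right _ _)).ne'
  push_cast
  field_simp

lemma dWeight_diagIdx_isTheta (hm : 0 < m) (hM : ∀ i, 0 < M i) (α : ℝ) :
    (fun l => dWeight n α (diagIdx hmn M l)) =Θ[atTop]
      fun l : ℕ => ((l : ℝ) + 1) ^ (α - n + ((m : ℝ) + 1) / 2) * muVal m M ^ (-(l : ℝ)) := by
  have hS : 0 < ∑ i, M i := Finset.sum_pos (fun i _ => hM i) ⟨⟨0, hm⟩, mem_univ _⟩
  have hS' : ((∑ i, M i : ℕ) : ℝ) ≠ 0 := by positivity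
  have hn : 1 ≤ n := by omega
  have hpow : (fun l : ℕ => ((n : ℝ) + ((∑ i, M i) * l : ℕ)) ^ α) =Θ[atTop]
      fun l : ℕ => (l : ℝ) ^ α := by
    simp only [Nat.cast_mul]
    exact (isTheta_const_add_mul_natCast _ hS').rpow
      (Eventually.of_forall fun l => by positivity) (Eventually.of_forall fun l => by positivity)
  have hdesc : (fun l : ℕ => ((n - 1 + (∑ i, M i) * l).descFactorial (n - 1) : ℝ)) =Θ[atTop]
      fun l : ℕ => (l : ℝ) ^ (n - 1) := by
    have hk : Tendsto (fun l : ℕ => n - 1 + (∑ i, M i) * l) atTop atTop :=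
      tendsto_atTop_mono (fun l => Nat.le_add_left _ _) (tendsto_id.const_mul_atTop' hS)
    refine ((isEquivalent_descFactorial (n - 1)).comp_tendsto hk).isTheta.trans ?_
    simp only [Function.comp_def, Nat.cast_add, Nat.cast_mul]
    exact (isTheta_const_add_mul_natCast _ hS').pow (n - 1)
  have hshift : (fun l : ℕ => (l : ℝ) ^ (α - n + ((m : ℝ) + 1) / 2)) =Θ[atTop]
      fun l : ℕ => ((l : ℝ) + 1) ^ (α - n + ((m : ℝ) + 1) / 2) := by
    refine IsTheta.rpow (Eventually.of_forall fun l => by positivity)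
      (Eventually.of_forall fun l => by positivity) ?_
    simpa [add_comm] using (isTheta_const_add_mul_natCast 1 one_ne_zero).symm
  simp only [dWeight_diagIdx hmn M α]
  refine ((((hpow.mul (isTheta_multinomial M hM hS)).div hdesc).const_mul_left
    (by positivity)).trans_eventuallyEq ?_).trans (hshift.mul isTheta_rfl)
  filter_upwards [eventually_ne_atTop 0] with l hl
  have hl : (0 : ℝ) < l := by positivity
  rw [← mul_assoc, mul_div_right_comm, ← rpow_add hl, ← rpow_natCast, ← rpow_sub hl,
    Nat.cast_sub hn]
  congr 2
  push_cast
  ring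

end diagIdx

lemma Dnorm2_eq_tsum_comp {n : ℕ} (α : ℝ) {A : (Fin n → ℕ) → ℂ} {d : ℕ → Fin n → ℕ}
    (hd : Function.Injective d) (hA : ∀ k, (∀ l, k ≠ d l) → A k = 0) :
    Dnorm2 n α A = ∑' l, ENNReal.ofReal (dWeight n α (d l) * ‖A (d l)‖ ^ 2) := by
  refine (hd.tsum_eq fun k hk => ?_).symm
  by_contra hkd
  exact hk (by simp [hA k fun l hl => hkd ⟨l, hl.symm⟩])

lemma ofReal_mul_tsum_ofReal {ι : Type*} {c : ℝ} (hc : 0 ≤ c) (f : ι → ℝ) :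
    ENNReal.ofReal c * ∑' i, ENNReal.ofReal (f i) = ∑' i, ENNReal.ofReal (c * f i) := by
  rw [← ENNReal.tsum_mul_left]
  simp_rw [ENNReal.ofReal_mul hc]

theorem stmt_6_general (n m : ℕ) (hm : 1 ≤ m) (hmn : m ≤ n)
    (M : Fin m → ℕ) (hM : ∀ i, 1 ≤ M i) (α : ℝ) :
    ∃ c C : ℝ, 0 < c ∧ 0 < C ∧
      ∀ (f : En n → ℂ) (a : ℕ → ℂ) (A : (Fin n → ℕ) → ℂ),
        DifferentiableOn ℂ f (Metric.ball 0 1) →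
        HasCoeffs n f A →
        (∀ l, A (diagIdx hmn M l) = a l) →
        (∀ k, (∀ l, k ≠ diagIdx hmn M l) → A k = 0) →
        ENNReal.ofReal c *
            (∑' l : ℕ, ENNReal.ofReal (((l : ℝ) + 1) ^ (α - n + ((m : ℝ) + 1) / 2) *
              (muVal m M) ^ (-(l : ℝ)) * ‖a l‖ ^ 2)) ≤ Dnorm2 n α A ∧
          Dnorm2 n α A ≤ ENNReal.ofReal C *
            (∑' l : ℕ, ENNReal.ofReal (((l : ℝ) + 1) ^ (α - n + ((m : ℝ) + 1) / 2) *
              (muVal m M) ^ (-(l : ℝ)) * ‖a l‖ ^ 2)) := by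
  have hμ := muVal_pos m M
  obtain ⟨c, C, hc, hC, hbound⟩ := exists_pos_bounds_of_isTheta
    (fun l => dWeight_pos (by omega) α _) (fun l => by positivity)
    (dWeight_diagIdx_isTheta hmn M hm hM α)
  refine ⟨c, C, hc, hC, fun f a A _ _ hdiag hoff => ?_⟩
  rw [Dnorm2_eq_tsum_comp α (diagIdx_injective hmn M hm hM) hoff, ofReal_mul_tsum_ofReal hc.le,
    ofReal_mul_tsum_ofReal hC.le]
  simp only [hdiag]
  constructor <;> refine ENNReal.tsum_le_tsum fun l => ENNReal.ofReal_le_ofReal ?_ <;>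
    rw [← mul_assoc]
  · exact mul_le_mul_of_nonneg_right (hbound l).1 (sq_nonneg _)
  · exact mul_le_mul_of_nonneg_right (hbound l).2 (sq_nonneg _)

/-- for functions of the diagonal form
`f(z) = Σ_l a_l (z₁^{M₁}⋯z_m^{M_m})^l`, the squared norm `‖f‖²_α` is comparable
(with constants depending only on `n, m, M, α`) to
`Σ_l (l+1)^{β(α)} μ^{-l} |a_l|²`, where `β(α) = α - n + (m+1)/2`. -/
theorem stmt_6 (n m : ℕ) (hn : 1 ≤ n) (hm : 1 ≤ m) (hmn : m ≤ n)
    (M : Fin m → ℕ) (hM : ∀ i, 1 ≤ M i) (α : ℝ) :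
    ∃ c C : ℝ, 0 < c ∧ 0 < C ∧
      ∀ (f : En n → ℂ) (a : ℕ → ℂ) (A : (Fin n → ℕ) → ℂ),
        DifferentiableOn ℂ f (Metric.ball 0 1) →
        HasCoeffs n f A →
        (∀ l, A (diagIdx hmn M l) = a l) →
        (∀ k, (∀ l, k ≠ diagIdx hmn M l) → A k = 0) →
        ENNReal.ofReal c *
            (∑' l : ℕ, ENNReal.ofReal (((l : ℝ) + 1) ^ (α - n + ((m : ℝ) + 1) / 2) *
              (muVal m M) ^ (-(l : ℝ)) * ‖a l‖ ^ 2)) ≤ Dnorm2 n α A ∧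
          Dnorm2 n α A ≤ ENNReal.ofReal C *
            (∑' l : ℕ, ENNReal.ofReal (((l : ℝ) + 1) ^ (α - n + ((m : ℝ) + 1) / 2) *
              (muVal m M) ^ (-(l : ℝ)) * ‖a l‖ ^ 2)) :=
  stmt_6_general n m hm hmn M hM α
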